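/- arXiv:2402.16833 — 3 statements merged into one kernel-verified Lean document; each statement's English description precedes it below -/
import Mathlib

section
/- In a δ-hyperbolic geodesic metric space X, for any isometry g, the stable length satisfies length^∞(g) ≥ transl(g) − 8δ, where transl(g) is the translation length. -/
open Filter Topology Set

/-!
If `m'` is the midpoint of a geodesic `[m, g m]`, then `g m'` is the midpoint of `[g m, g² m]`,
and thinness of the triangle `m, g m, g² m` gives `d(m', g m') ≤ d(m, g² m) / 2 + 2δ`.
Taking the infimum over `m`, `transl(g²) ≥ 2 transl(g) - 4δ`, so by induction
`transl(g^(2^n)) ≥ 2^n (transl(g) - 4δ) + 4δ`. Evaluating at `m₀` along the subsequence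
`k = 2^n` of `d(m₀, g^k m₀) / k` gives `length^∞(g) ≥ transl(g) - 4δ`.
-/

/-- `f : ℝ → X` is a geodesic segment from `x` to `y`, parametrized by arclength
on the interval `[0, dist x y]`. -/
def IsGeodesicSegment {X : Type*} [MetricSpace X] (f : ℝ → X) (x y : X) : Prop :=
  f 0 = x ∧ f (dist x y) = y ∧
    ∀ s ∈ Icc (0 : ℝ) (dist x y), ∀ t ∈ Icc (0 : ℝ) (dist x y),
      dist (f s) (f t) = |s - t|

namespace IsGeodesicSegment

variable {X : Type*} [MetricSpace X] {f : ℝ → X} {x y a b p q : X}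

theorem dist_apply (hf : IsGeodesicSegment f x y) {t : ℝ} (ht : t ∈ Icc 0 (dist x y)) :
    dist x (f t) = t := by
  rw [← hf.1, hf.2.2 0 ⟨le_rfl, dist_nonneg⟩ t ht, zero_sub, abs_neg, abs_of_nonneg ht.1]

theorem dist_add_dist (hf : IsGeodesicSegment f x y) (hp : p ∈ f '' Icc 0 (dist x y)) :
    dist x p + dist p y = dist x y := by
  obtain ⟨t, ht, rfl⟩ := hp
  conv_lhs => rw [← hf.2.1]
  rw [hf.dist_apply ht, hf.2.2 t ht _ ⟨dist_nonneg, le_rfl⟩, abs_of_nonpos (by linarith [ht.2])]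
  ring

theorem dist_eq_abs_sub (hf : IsGeodesicSegment f x y) (hp : p ∈ f '' Icc 0 (dist x y))
    (hq : q ∈ f '' Icc 0 (dist x y)) : dist p q = |dist x p - dist x q| := by
  obtain ⟨s, hs, rfl⟩ := hp
  obtain ⟨t, ht, rfl⟩ := hq
  rw [hf.2.2 s hs t ht, hf.dist_apply hs, hf.dist_apply ht]

theorem symm (hf : IsGeodesicSegment f x y) :
    IsGeodesicSegment (fun t => f (dist x y - t)) y x := by
  obtain ⟨h0, h1, hd⟩ := hf
  refine ⟨by simpa using h1, by simpa [dist_comm] using h0, fun s hs t ht => ?_⟩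
  rw [dist_comm y x] at hs ht
  rw [hd _ ⟨by linarith [hs.2], by linarith [hs.1]⟩ _ ⟨by linarith [ht.2], by linarith [ht.1]⟩,
    abs_sub_comm]
  ring_nf

theorem image_symm (f : ℝ → X) (x y : X) :
    (fun t => f (dist x y - t)) '' Icc 0 (dist y x) = f '' Icc 0 (dist x y) := by
  rw [dist_comm y x, ← image_image f (dist x y - ·), image_const_sub_Icc, sub_self, sub_zero]

theorem map {Y : Type*} [MetricSpace Y] {φ : X → Y} (hφ : Isometry φ)
    (hf : IsGeodesicSegment f x y) : IsGeodesicSegment (φ ∘ f) (φ x) (φ y) := by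
  obtain ⟨h0, h1, hd⟩ := hf
  have hφxy : dist (φ x) (φ y) = dist x y := hφ.dist_eq x y
  refine ⟨by simp [h0], by simp [hφxy, h1], fun s hs t ht => ?_⟩
  rw [hφxy] at hs ht
  simp [hφ.dist_eq, hd s hs t ht]

theorem dist_le_two_mul_dist (hf : IsGeodesicSegment f x y) (hb : b ∈ f '' Icc 0 (dist x y))
    (hp : p ∈ f '' Icc 0 (dist x y)) (hab : dist x a = dist x b) :
    dist a b ≤ 2 * dist a p :=
  calc dist a b ≤ dist a p + dist p b := dist_triangle _ _ _
    _ = dist a p + |dist p x - dist a x| := by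
      rw [hf.dist_eq_abs_sub hp hb, ← hab, dist_comm x p, dist_comm x a]
    _ ≤ 2 * dist a p := by linarith [abs_dist_sub_le p a x, dist_comm a p]

theorem dist_le_sub_of_le_dist (hf : IsGeodesicSegment f x y) (hp : p ∈ f '' Icc 0 (dist x y))
    (hq : q ∈ f '' Icc 0 (dist x y)) {r : ℝ} (hxp : r ≤ dist x p) (hpy : r ≤ dist p y)
    (hxq : r ≤ dist x q) (hqy : r ≤ dist q y) : dist p q ≤ dist x y - 2 * r := by
  have := hf.dist_add_dist hp
  have := hf.dist_add_dist hq
  rw [hf.dist_eq_abs_sub hp hq]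
  exact abs_sub_le_iff.2 ⟨by linarith, by linarith⟩

end IsGeodesicSegment

def ThinTriangles (δ : ℝ) (X : Type*) [MetricSpace X] : Prop :=
  ∀ (x y z : X) (f₁ f₂ f₃ : ℝ → X),
    IsGeodesicSegment f₁ x y → IsGeodesicSegment f₂ y z → IsGeodesicSegment f₃ x z →
    ∀ s ∈ Icc (0 : ℝ) (dist x y), ∃ p : X,
      ((∃ t ∈ Icc (0 : ℝ) (dist y z), p = f₂ t) ∨
        (∃ t ∈ Icc (0 : ℝ) (dist x z), p = f₃ t)) ∧ dist (f₁ s) p ≤ δ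

namespace ThinTriangles

variable {X : Type*} [MetricSpace X] {δ : ℝ} {f₁ f₂ f₃ : ℝ → X} {x y z a b : X}

theorem exists_dist_le_of_mem_left (hX : ThinTriangles δ X) (hf₁ : IsGeodesicSegment f₁ x y)
    (hf₂ : IsGeodesicSegment f₂ y z) (hf₃ : IsGeodesicSegment f₃ x z)
    (ha : a ∈ f₁ '' Icc 0 (dist x y)) :
    ∃ p ∈ f₂ '' Icc 0 (dist y z) ∪ f₃ '' Icc 0 (dist x z), dist a p ≤ δ := by
  obtain ⟨s, hs, rfl⟩ := ha
  obtain ⟨p, ⟨t, ht, rfl⟩ | ⟨t, ht, rfl⟩, hp⟩ := hX x y z f₁ f₂ f₃ hf₁ hf₂ hf₃ s hs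
  · exact ⟨_, Or.inl (mem_image_of_mem _ ht), hp⟩
  · exact ⟨_, Or.inr (mem_image_of_mem _ ht), hp⟩

theorem exists_dist_le_of_mem_middle (hX : ThinTriangles δ X) (hf₁ : IsGeodesicSegment f₁ x y)
    (hf₂ : IsGeodesicSegment f₂ y z) (hf₃ : IsGeodesicSegment f₃ x z)
    (hb : b ∈ f₂ '' Icc 0 (dist y z)) :
    ∃ q ∈ f₁ '' Icc 0 (dist x y) ∪ f₃ '' Icc 0 (dist x z), dist b q ≤ δ := by
  have := hX.exists_dist_le_of_mem_left hf₂ hf₃.symm hf₁.symm hb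
  rwa [IsGeodesicSegment.image_symm, IsGeodesicSegment.image_symm, union_comm] at this

theorem dist_le_of_midpoints (hX : ThinTriangles δ X) (hf₁ : IsGeodesicSegment f₁ x y)
    (hf₂ : IsGeodesicSegment f₂ y z) (hf₃ : IsGeodesicSegment f₃ x z)
    (hyz : dist y z = dist x y) (ha : a ∈ f₁ '' Icc 0 (dist x y)) (hxa : dist x a = dist x y / 2)
    (hb : b ∈ f₂ '' Icc 0 (dist y z)) (hyb : dist y b = dist x y / 2) :
    dist a b ≤ dist x z / 2 + 2 * δ := by
  have hay : dist a y = dist x y / 2 := by linarith [hf₁.dist_add_dist ha]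
  have hbz : dist b z = dist x y / 2 := by linarith [hf₂.dist_add_dist hb]
  have hxz : 0 ≤ dist x z := dist_nonneg
  obtain ⟨p, hp₂ | hp₃, hap⟩ := hX.exists_dist_le_of_mem_left hf₁ hf₂ hf₃ ha
  · linarith [hf₂.dist_le_two_mul_dist hb hp₂ (by rw [dist_comm y a, hay, hyb])]
  obtain ⟨q, hq₁ | hq₃, hbq⟩ := hX.exists_dist_le_of_mem_middle hf₁ hf₂ hf₃ hb
  · rw [← IsGeodesicSegment.image_symm] at ha hq₁
    linarith [hf₁.symm.dist_le_two_mul_dist ha hq₁ (by rw [hyb, dist_comm y a, hay]), dist_comm a b]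
  -- Both `a` and `b` are close to `[x, z]`, at points lying `d(x, y) / 2 - δ` away from its ends.
  have hpq := hf₃.dist_le_sub_of_le_dist hp₃ hq₃ (r := dist x y / 2 - δ)
    (by linarith [dist_triangle x p a, dist_comm a p])
    (by linarith [dist_triangle y a z, dist_triangle a p z, dist_comm y a])
    (by linarith [dist_triangle x b y, dist_triangle x q b, dist_comm q b, dist_comm b y])
    (by linarith [dist_triangle b q z])
  linarith [dist_triangle4 a p q b, dist_comm q b, dist_triangle a y b]

end ThinTriangles

section TranslationLength

variable {X : Type*} [MetricSpace X]

theorem IsometryEquiv.coe_pow (g : X ≃ᵢ X) (n : ℕ) : ⇑(g ^ n) = g^[n] := by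
  induction n with
  | zero => rfl
  | succ n ih => rw [pow_succ', IsometryEquiv.coe_mul, ih, Function.iterate_succ']

noncomputable def translationLength (g : X ≃ᵢ X) : ℝ :=
  ⨅ x, dist x (g x)

theorem translationLength_le (g : X ≃ᵢ X) (x : X) : translationLength g ≤ dist x (g x) :=
  ciInf_le ⟨0, by rintro _ ⟨y, rfl⟩; exact dist_nonneg⟩ x

variable {δ : ℝ}

theorem ThinTriangles.two_mul_translationLength_sub_le (hX : ThinTriangles δ X)
    (hgeo : ∀ x y : X, ∃ f : ℝ → X, IsGeodesicSegment f x y) (g : X ≃ᵢ X) (x : X) :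
    2 * translationLength g - 4 * δ ≤ dist x (g (g x)) := by
  obtain ⟨f₁, hf₁⟩ := hgeo x (g x)
  obtain ⟨f₃, hf₃⟩ := hgeo x (g (g x))
  have hD : dist (g x) (g (g x)) = dist x (g x) := g.dist_eq _ _
  have hmid : dist x (g x) / 2 ∈ Icc 0 (dist x (g x)) :=
    ⟨by positivity, by linarith [dist_nonneg (x := x) (y := g x)]⟩
  have hxa := hf₁.dist_apply hmid
  have hb : g (f₁ (dist x (g x) / 2)) ∈ (g ∘ f₁) '' Icc 0 (dist (g x) (g (g x))) := by
    rw [hD]; exact mem_image_of_mem _ hmid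
  have := hX.dist_le_of_midpoints hf₁ (hf₁.map g.isometry) hf₃ hD (mem_image_of_mem _ hmid) hxa hb
    (by rw [g.dist_eq, hxa])
  linarith [translationLength_le g (f₁ (dist x (g x) / 2))]

theorem ThinTriangles.two_pow_mul_translationLength_le [Nonempty X] (hX : ThinTriangles δ X)
    (hgeo : ∀ x y : X, ∃ f : ℝ → X, IsGeodesicSegment f x y) (g : X ≃ᵢ X) (n : ℕ) :
    2 ^ n * (translationLength g - 4 * δ) + 4 * δ ≤ translationLength (g ^ 2 ^ n) := by
  induction n with
  | zero => simp
  | succ n ih =>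
    have hsq : 2 * translationLength (g ^ 2 ^ n) - 4 * δ ≤ translationLength (g ^ 2 ^ (n + 1)) :=
      le_ciInf fun x => by
        simpa [pow_succ, pow_mul, sq] using hX.two_mul_translationLength_sub_le hgeo (g ^ 2 ^ n) x
    rw [pow_succ]
    linarith

end TranslationLength

/-- In a geodesic metric space `X` which is `δ`-hyperbolic (every geodesic triangle is
`δ`-thin: each side lies in the `δ`-neighbourhood of the union of the other two sides),
for any isometry `g` of `X` the stable length `length^∞(g) = lim_k d(m, g^k·m)/k`
satisfies `length^∞(g) ≥ transl(g) − 8δ`, where `transl(g) = inf_x d(x, g·x)` is the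
translation length of `g`. -/
theorem stable_length_ge_translation_length_sub_of_hyperbolic
    {X : Type*} [MetricSpace X] (δ : ℝ) (hδ : 0 ≤ δ)
    (hgeo : ∀ x y : X, ∃ f : ℝ → X, IsGeodesicSegment f x y)
    (hthin : ∀ (x y z : X) (f₁ f₂ f₃ : ℝ → X),
      IsGeodesicSegment f₁ x y → IsGeodesicSegment f₂ y z → IsGeodesicSegment f₃ x z →
      ∀ s ∈ Icc (0 : ℝ) (dist x y), ∃ p : X,
        ((∃ t ∈ Icc (0 : ℝ) (dist y z), p = f₂ t) ∨
          (∃ t ∈ Icc (0 : ℝ) (dist x z), p = f₃ t)) ∧ dist (f₁ s) p ≤ δ)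
    (g : X ≃ᵢ X) (m₀ : X) (L : ℝ)
    (hL : Tendsto (fun k : ℕ => dist m₀ (g^[k] m₀) / k) atTop (𝓝 L)) :
    (⨅ x : X, dist x (g x)) - 8 * δ ≤ L := by
  have : Nonempty X := ⟨m₀⟩
  have hbound (n : ℕ) : translationLength g - 4 * δ ≤ dist m₀ (g^[2 ^ n] m₀) / (2 ^ n : ℕ) := by
    have hpow := ThinTriangles.two_pow_mul_translationLength_le hthin hgeo g n
    have hm₀ := translationLength_le (g ^ 2 ^ n) m₀
    rw [IsometryEquiv.coe_pow] at hm₀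
    rw [le_div_iff₀ (by positivity)]
    push_cast
    linarith
  have hsub := hL.comp (tendsto_pow_atTop_atTop_of_one_lt one_lt_two)
  have hlim := ge_of_tendsto' hsub hbound
  change translationLength g - 8 * δ ≤ L
  linarith
end

section
/- Let ω be the standard symplectic form on ℝ^{2n}. For a symplectic basis (e₁,…,e_{2n}), let B = ℙ(ℝ_{>0}-span(e₁,…,e_{2n})) be the associated open symplectic simplex in ℙ(ℝ^{2n}), and let B* = {[v] ∈ ℙ(ℝ^{2n}) : ℙ(v^⊥) ∩ cl(B) = ∅} where v^⊥ is the ω-orthogonal of v. Then B* is again a symplectic simplex, namely the one associated to the symplectic basis (e_{2n}, −e_{2n−1}, …, e₂, −e₁). -/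
open LinearAlgebra.Projectivization Projectivization

/-- The quotient topology on projective space. -/
noncomputable instance (n : ℕ) : TopologicalSpace (Projectivization ℝ (Fin n → ℝ)) :=
  instTopologicalSpaceQuotient

/-- The standard symplectic form `ω(v,v′) = Σᵢ (−1)ⁱ vᵢ v′_{2n+1−i}` on `ℝ^{2n}`
(0-indexed version). -/
def symplForm (n : ℕ) (v w : Fin (2 * n) → ℝ) : ℝ :=
  ∑ j : Fin (2 * n), (-1 : ℝ) ^ ((j : ℕ) + 1) * v j * w (Fin.rev j)

/-- A symplectic basis of `ℝ^{2n}`: a basis in which the matrix of `ω` is antidiagonal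
with alternating entries `±1` (normalized so that the canonical basis is symplectic). -/
def IsSymplecticBasis (n : ℕ) (e : Fin (2 * n) → (Fin (2 * n) → ℝ)) : Prop :=
  LinearIndependent ℝ e ∧ Submodule.span ℝ (Set.range e) = ⊤ ∧
    ∀ i j : Fin (2 * n), symplForm n (e i) (e j)
      = if j = Fin.rev i then (-1 : ℝ) ^ ((i : ℕ) + 1) else 0

/-- The open symplectic simplex `B = ℙ(ℝ_{>0}-span(e₁,…,e_{2n}))` in `ℙ(ℝ^{2n})`
associated to a symplectic basis `e`. -/
def symplSimplex (n : ℕ) (e : Fin (2 * n) → (Fin (2 * n) → ℝ)) :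
    Set (Projectivization ℝ (Fin (2 * n) → ℝ)) :=
  {P | ∃ (v : Fin (2 * n) → ℝ) (hv : v ≠ 0),
    (∃ c : Fin (2 * n) → ℝ, (∀ i, 0 < c i) ∧ v = ∑ i, c i • e i) ∧
    P = Projectivization.mk ℝ v hv}

/-- The dual `B* = {[v] : ℙ(v^⊥) ∩ cl(B) = ∅}` of a subset `B` of `ℙ(ℝ^{2n})`, where
`v^⊥` is the `ω`-orthogonal hyperplane of `v`. -/
def symplDual (n : ℕ) (B : Set (Projectivization ℝ (Fin (2 * n) → ℝ))) :
    Set (Projectivization ℝ (Fin (2 * n) → ℝ)) :=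
  {P | ∃ (v : Fin (2 * n) → ℝ) (hv : v ≠ 0), P = Projectivization.mk ℝ v hv ∧
    ∀ Q ∈ closure B, ∀ (w : Fin (2 * n) → ℝ) (hw : w ≠ 0),
      Q = Projectivization.mk ℝ w hw → symplForm n v w ≠ 0}

/-!
The new basis `f` satisfies `ω(fⱼ, eᵢ) = δᵢⱼ`, so if `a` and `d` are the coordinates of `v`
in `f` and of `w` in `e`, `ω(v, w) = a ⬝ᵥ d`. The closure of `B` consists of the points with a
representative of nonnegative `e`-coordinates, and every such point lies in it. Hence `[v] ∈ B*`
iff `a ⬝ᵥ d ≠ 0` for all nonzero `d ≥ 0`, i.e. iff all `aᵢ` are nonzero and of one sign.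
-/

section DotProduct

variable {ι R : Type*} [Fintype ι] [Field R] [LinearOrder R] [IsStrictOrderedRing R]

theorem dotProduct_pos_of_pos_of_nonneg {a d : ι → R} (ha : ∀ i, 0 < a i) (hd : 0 ≤ d)
    (hd0 : d ≠ 0) : 0 < a ⬝ᵥ d := by
  obtain ⟨i, hi⟩ := Function.ne_iff.1 hd0
  exact Finset.sum_pos' (fun j _ => mul_nonneg (ha j).le (hd j))
    ⟨i, Finset.mem_univ i, mul_pos (ha i) ((hd i).lt_of_ne' hi)⟩

theorem forall_nonneg_dotProduct_ne_zero_iff {a : ι → R} :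
    (∀ d : ι → R, 0 ≤ d → d ≠ 0 → a ⬝ᵥ d ≠ 0) ↔ (∀ i, 0 < a i) ∨ (∀ i, a i < 0) := by
  classical
  refine ⟨fun h => ?_, ?_⟩
  · by_contra! ⟨⟨i, hi⟩, ⟨j, hj⟩⟩
    by_cases hzero : ∃ k, a k = 0
    · obtain ⟨k, hk⟩ := hzero
      exact h (Pi.single k 1) (Pi.single_nonneg.2 zero_le_one)
        (Pi.single_eq_zero_iff.not.2 one_ne_zero) (by rw [dotProduct_single, hk, zero_mul])
    push Not at hzero
    have hij : i ≠ j := by rintro rfl; exact hzero i (le_antisymm hi hj)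
    -- now `a i < 0 < a j`
    refine h (Pi.single i (a j) + Pi.single j (-a i))
      (add_nonneg (Pi.single_nonneg.2 hj) (Pi.single_nonneg.2 (neg_nonneg.2 hi)))
      (fun h0 => hzero j ?_) ?_
    · simpa [Pi.single_apply, hij] using congrFun h0 i
    · rw [dotProduct_add, dotProduct_single, dotProduct_single]
      ring
  · rintro (ha | ha) d hd hd0
    · exact (dotProduct_pos_of_pos_of_nonneg ha hd hd0).ne'
    · have := dotProduct_pos_of_pos_of_nonneg (a := -a) (fun i => neg_pos.2 (ha i)) hd hd0
      rw [neg_dotProduct] at this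
      exact (neg_pos.1 this).ne

end DotProduct

section ProjectiveSpace

variable {m : ℕ}

theorem mem_of_mk_eq_mk {S : Set (Fin m → ℝ)} (hS : ∀ c : ℝˣ, ∀ v ∈ S, c • v ∈ S)
    {v w : Fin m → ℝ} {hv : v ≠ 0} {hw : w ≠ 0} (h : mk ℝ v hv = mk ℝ w hw) (hvS : v ∈ S) :
    w ∈ S := by
  obtain ⟨c, rfl⟩ := (mk_eq_mk_iff ℝ w v hw hv).1 h.symm
  exact hS c v hvS

theorem isClosed_setOf_forall_mk_eq_imp_mem {S : Set (Fin m → ℝ)} (hS : IsClosed S)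
    (hsmul : ∀ c : ℝˣ, ∀ v ∈ S, c • v ∈ S) :
    IsClosed {P : ℙ ℝ (Fin m → ℝ) | ∀ v (hv : v ≠ 0), P = mk ℝ v hv → v ∈ S} := by
  refine isQuotientMap_quot_mk.isClosed_preimage.1 ?_
  convert hS.preimage continuous_subtype_val using 1
  ext ⟨v, hv⟩
  exact ⟨fun h => h v hv rfl, fun hvS w hw h => mem_of_mk_eq_mk hsmul h hvS⟩

theorem mk_mem_closure_of_mem_closure {s : Set (Fin m → ℝ)} {T : Set (ℙ ℝ (Fin m → ℝ))}
    (hsT : ∀ v (hv : v ≠ 0), v ∈ s → mk ℝ v hv ∈ T) {v : Fin m → ℝ} (hv : v ≠ 0)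
    (hvs : v ∈ closure s) : mk ℝ v hv ∈ closure T := by
  have hsub : (⟨v, hv⟩ : {v : Fin m → ℝ // v ≠ 0}) ∈ closure (Subtype.val ⁻¹' s) := by
    rw [closure_subtype]
    refine closure_mono ?_ (isOpen_ne.inter_closure ⟨hv, hvs⟩)
    exact fun x ⟨hx, hxs⟩ => ⟨⟨x, hx⟩, hxs, rfl⟩
  refine closure_mono ?_ (image_closure_subset_closure_image continuous_quot_mk ⟨_, hsub, rfl⟩)
  rintro _ ⟨⟨w, hw⟩, hws, rfl⟩
  exact hsT w hw hws

end ProjectiveSpace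

section Simplex

variable {n : ℕ}

theorem mk_mem_closure_symplSimplex (e : Fin (2 * n) → Fin (2 * n) → ℝ) {d : Fin (2 * n) → ℝ}
    (hd : 0 ≤ d) (hw : ∑ i, d i • e i ≠ 0) :
    mk ℝ (∑ i, d i • e i) hw ∈ closure (symplSimplex n e) := by
  refine mk_mem_closure_of_mem_closure
    (s := (fun c : Fin (2 * n) → ℝ => ∑ i, c i • e i) '' Set.univ.pi fun _ => Set.Ioi 0) ?_ hw ?_
  · rintro _ hv ⟨c, hc, rfl⟩
    exact ⟨_, hv, ⟨c, fun i => hc i (Set.mem_univ i), rfl⟩, rfl⟩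
  · refine image_closure_subset_closure_image (by fun_prop) ⟨d, ?_, rfl⟩
    rw [closure_pi_set]
    exact fun i _ => by rw [closure_Ioi]; exact hd i

theorem closure_symplSimplex_subset (b : Module.Basis (Fin (2 * n)) ℝ (Fin (2 * n) → ℝ)) :
    closure (symplSimplex n b) ⊆
      {P | ∀ w (hw : w ≠ 0), P = mk ℝ w hw → 0 ≤ b.equivFun w ∨ b.equivFun w ≤ 0} := by
  have hsmul : ∀ c : ℝˣ, ∀ w ∈ {w | 0 ≤ b.equivFun w ∨ b.equivFun w ≤ 0},
      c • w ∈ {w | 0 ≤ b.equivFun w ∨ b.equivFun w ≤ 0} := by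
    rintro c w hw
    simp only [Set.mem_ofPred_eq, Units.smul_def, map_smul] at hw ⊢
    rcases hw with hw | hw <;> rcases (c.ne_zero : (c : ℝ) ≠ 0).lt_or_gt with hc | hc
    exacts [.inr (smul_nonpos_of_nonpos_of_nonneg hc.le hw), .inl (smul_nonneg hc.le hw),
      .inl (smul_nonneg_of_nonpos_of_nonpos hc.le hw),
      .inr (smul_nonpos_of_nonneg_of_nonpos hc.le hw)]
  have hcont : Continuous b.equivFun := b.equivFun.toLinearMap.continuous_of_finiteDimensional
  refine closure_minimal ?_ (isClosed_setOf_forall_mk_eq_imp_mem ?_ hsmul)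
  · rintro _ ⟨v, hv, ⟨c, hc, rfl⟩, rfl⟩ w hw h
    refine mem_of_mk_eq_mk hsmul h (.inl fun i => ?_)
    rw [← b.equivFun_symm_apply, LinearEquiv.apply_symm_apply]
    exact (hc i).le
  · exact (isClosed_le continuous_const hcont).union (isClosed_le hcont continuous_const)

theorem mk_mem_symplSimplex_of_pos_or_neg (b : Module.Basis (Fin (2 * n)) ℝ (Fin (2 * n) → ℝ))
    {v : Fin (2 * n) → ℝ} (hv : v ≠ 0)
    (h : (∀ i, 0 < b.equivFun v i) ∨ (∀ i, b.equivFun v i < 0)) :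
    mk ℝ v hv ∈ symplSimplex n b := by
  rcases h with h | h
  · exact ⟨v, hv, ⟨_, h, (b.sum_equivFun v).symm⟩, rfl⟩
  · refine ⟨-v, neg_ne_zero.2 hv, ⟨-b.equivFun v, fun i => neg_pos.2 (h i), ?_⟩, ?_⟩
    · rw [← map_neg]
      exact (b.sum_equivFun _).symm
    · exact (mk_eq_mk_iff ℝ _ _ _ _).2 ⟨-1, by simp⟩

end Simplex

section Symplectic

variable {n : ℕ}

theorem neg_one_pow_val_rev {R : Type*} [Ring R] (i : Fin (2 * n)) :
    (-1 : R) ^ (Fin.rev i : ℕ) = (-1) ^ ((i : ℕ) + 1) := by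
  rw [neg_one_pow_eq_pow_mod_two, neg_one_pow_eq_pow_mod_two ((i : ℕ) + 1), Fin.val_rev]
  congr 1
  omega

def symplFormₗ (n : ℕ) : (Fin (2 * n) → ℝ) →ₗ[ℝ] (Fin (2 * n) → ℝ) →ₗ[ℝ] ℝ :=
  LinearMap.mk₂ ℝ (symplForm n)
    (fun _ _ _ => by
      simp only [symplForm, ← Finset.sum_add_distrib, Pi.add_apply]
      exact Finset.sum_congr rfl fun _ _ => by ring)
    (fun _ _ _ => by
      simp only [symplForm, Finset.mul_sum, Pi.smul_apply, smul_eq_mul]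
      exact Finset.sum_congr rfl fun _ _ => by ring)
    (fun _ _ _ => by
      simp only [symplForm, ← Finset.sum_add_distrib, Pi.add_apply]
      exact Finset.sum_congr rfl fun _ _ => by ring)
    (fun _ _ _ => by
      simp only [symplForm, Finset.mul_sum, Pi.smul_apply, smul_eq_mul]
      exact Finset.sum_congr rfl fun _ _ => by ring)

theorem symplFormₗ_apply (v w : Fin (2 * n) → ℝ) : symplFormₗ n v w = symplForm n v w := rfl

def symplDualBasis (n : ℕ) (e : Fin (2 * n) → Fin (2 * n) → ℝ) : Fin (2 * n) → Fin (2 * n) → ℝ :=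
  fun j => (-1 : ℝ) ^ (j : ℕ) • e (Fin.rev j)

variable {e : Fin (2 * n) → Fin (2 * n) → ℝ}

theorem symplForm_symplDualBasis_apply (he : IsSymplecticBasis n e) (i j : Fin (2 * n)) :
    symplForm n (symplDualBasis n e j) (e i) = if i = j then 1 else 0 := by
  rw [symplDualBasis, ← symplFormₗ_apply, map_smul, LinearMap.smul_apply, symplFormₗ_apply,
    he.2.2, Fin.rev_rev]
  split_ifs with h
  · have := j.isLt
    rw [smul_eq_mul, ← pow_add]
    exact Even.neg_one_pow ⟨n, by rw [Fin.val_rev]; omega⟩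
  · exact smul_zero _

theorem isSymplecticBasis_symplDualBasis (he : IsSymplecticBasis n e) :
    IsSymplecticBasis n (symplDualBasis n e) := by
  have hli : LinearIndependent ℝ (symplDualBasis n e) := by
    convert (he.1.comp _ Fin.rev_injective).units_smul fun j : Fin (2 * n) => (-1 : ℝˣ) ^ (j : ℕ)
    ext j : 1
    simp [symplDualBasis, Units.smul_def]
  refine ⟨hli, hli.span_eq_top_of_card_eq_finrank' (by simp), fun i j => ?_⟩
  rw [show symplDualBasis n e j = (-1 : ℝ) ^ (j : ℕ) • e (Fin.rev j) from rfl,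
    ← symplFormₗ_apply, map_smul, symplFormₗ_apply, symplForm_symplDualBasis_apply he]
  by_cases h : j = Fin.rev i
  · subst h
    rw [if_pos (Fin.rev_rev i), if_pos rfl, smul_eq_mul, mul_one, neg_one_pow_val_rev]
  · rw [if_neg (fun h' => h (by rw [← h', Fin.rev_rev])), if_neg h, smul_zero]

variable {b b' : Module.Basis (Fin (2 * n)) ℝ (Fin (2 * n) → ℝ)}

theorem symplForm_symplDualBasis_left (he : IsSymplecticBasis n b) (j : Fin (2 * n))
    (w : Fin (2 * n) → ℝ) : symplForm n (symplDualBasis n b j) w = b.equivFun w j := by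
  have : symplFormₗ n (symplDualBasis n b j) = b.coord j := b.ext fun i => by
    rw [symplFormₗ_apply, symplForm_symplDualBasis_apply he, b.coord_apply, b.repr_self,
      Finsupp.single_apply, eq_comm]
  exact LinearMap.congr_fun this w

theorem symplForm_eq_dotProduct (he : IsSymplecticBasis n b) (hb' : ⇑b' = symplDualBasis n b)
    (v w : Fin (2 * n) → ℝ) : symplForm n v w = b'.equivFun v ⬝ᵥ b.equivFun w := by
  conv_lhs => rw [← b'.sum_equivFun v, ← symplFormₗ_apply]
  simp only [map_sum, map_smul, LinearMap.sum_apply, LinearMap.smul_apply,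
    symplFormₗ_apply, hb', symplForm_symplDualBasis_left he, smul_eq_mul, dotProduct]

theorem symplDual_symplSimplex_subset (he : IsSymplecticBasis n b)
    (hb' : ⇑b' = symplDualBasis n b) :
    symplDual n (symplSimplex n b) ⊆ symplSimplex n b' := by
  rintro _ ⟨v, hv, rfl, hdual⟩
  refine mk_mem_symplSimplex_of_pos_or_neg b' hv
    (forall_nonneg_dotProduct_ne_zero_iff.1 fun d hd hd0 => ?_)
  have hw : ∑ i, d i • b i ≠ 0 := by
    rw [← b.equivFun_symm_apply]
    exact b.equivFun.symm.map_ne_zero_iff.2 hd0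
  have := hdual _ (mk_mem_closure_symplSimplex b hd hw) _ hw rfl
  rwa [symplForm_eq_dotProduct he hb', ← b.equivFun_symm_apply,
    LinearEquiv.apply_symm_apply] at this

theorem symplSimplex_subset_symplDual (he : IsSymplecticBasis n b)
    (hb' : ⇑b' = symplDualBasis n b) :
    symplSimplex n b' ⊆ symplDual n (symplSimplex n b) := by
  rintro _ ⟨v, hv, ⟨c, hc, rfl⟩, rfl⟩
  refine ⟨_, hv, rfl, fun Q hQ w hw hQw => ?_⟩
  have hd0 : b.equivFun w ≠ 0 := b.equivFun.map_ne_zero_iff.2 hw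
  have key := forall_nonneg_dotProduct_ne_zero_iff.2 (Or.inl hc)
  rw [symplForm_eq_dotProduct he hb', ← b'.equivFun_symm_apply, LinearEquiv.apply_symm_apply]
  rcases closure_symplSimplex_subset b hQ w hw hQw with hd | hd
  · exact key _ hd hd0
  · simpa [dotProduct_neg] using key _ (neg_nonneg.2 hd) (neg_ne_zero.2 hd0)

end Symplectic

/-- The dual of the symplectic simplex associated to a symplectic basis
`(e₁, …, e_{2n})` is again a symplectic simplex, namely the one associated to the
symplectic basis `(e_{2n}, −e_{2n−1}, …, e₂, −e₁)`. -/
theorem symplDual_symplSimplex (n : ℕ) (e : Fin (2 * n) → (Fin (2 * n) → ℝ))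
    (he : IsSymplecticBasis n e) :
    IsSymplecticBasis n (fun j => (-1 : ℝ) ^ (j : ℕ) • e (Fin.rev j)) ∧
    symplDual n (symplSimplex n e)
      = symplSimplex n (fun j => (-1 : ℝ) ^ (j : ℕ) • e (Fin.rev j)) := by
  obtain ⟨b, rfl⟩ : ∃ b : Module.Basis (Fin (2 * n)) ℝ (Fin (2 * n) → ℝ), ⇑b = e :=
    ⟨.mk he.1 he.2.1.ge, Module.Basis.coe_mk _ _⟩
  have hf : IsSymplecticBasis n (symplDualBasis n b) := isSymplecticBasis_symplDualBasis he
  obtain ⟨b', hb'⟩ : ∃ b' : Module.Basis (Fin (2 * n)) ℝ (Fin (2 * n) → ℝ),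
      ⇑b' = symplDualBasis n b :=
    ⟨.mk hf.1 hf.2.1.ge, Module.Basis.coe_mk _ _⟩
  refine ⟨hf, ?_⟩
  change _ = symplSimplex n (symplDualBasis n b)
  rw [← hb']
  exact (symplDual_symplSimplex_subset he hb').antisymm (symplSimplex_subset_symplDual he hb')
end

section
/- For symplectic simplices B₁, B₂ in ℙ(ℝ^{2n}) (associated to symplectic bases as above, with duals B* defined via the symplectic form), B₁ ⊆ B₂* if and only if B₂ ⊆ B₁*. -/
/-!
Both inclusions are equivalent to the condition that `ω(v, w) ≠ 0` for all `[v] ∈ B₁` and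
`[w] ∈ B₂`, which is symmetric because `ω` is skew. Passing from `B₂` to its closure costs nothing:
in coordinates `ω(Σ cᵢ e₁ᵢ, Σ dⱼ e₂ⱼ) = cᵀ M d` with `Mᵢⱼ = ω(e₁ᵢ, e₂ⱼ)`. This bilinear expression
does not vanish on the connected set of pairs of positive vectors, so it has a constant sign `s`
there, and by continuity `s M ≥ 0` entrywise. As `ω` is nondegenerate, no column of `M` vanishes,
hence `s cᵀ M d > 0` for `c > 0` and `d ≥ 0`, `d ≠ 0`; and the closure of a simplex is the
projectivized closed cone.
-/

open LinearAlgebra.Projectivization Projectivization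

open Matrix

theorem IsPreconnected.mul_pos_of_ne_zero {X : Type*} [TopologicalSpace X] {S : Set X}
    (hS : IsPreconnected S) {f : X → ℝ} (hf : ContinuousOn f S) (hf0 : ∀ x ∈ S, f x ≠ 0)
    {x y : X} (hx : x ∈ S) (hy : y ∈ S) : 0 < f x * f y := by
  by_contra! hxy
  obtain ⟨z, hz, hfz⟩ := hS.intermediate_value₂ (f := fun z => f x * f z) hy hx
    (continuousOn_const.mul hf) continuousOn_const hxy (mul_self_nonneg (f x))
  exact hf0 z hz ((mul_eq_zero.mp hfz).resolve_left (hf0 x hx))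

namespace Matrix

variable {ι κ : Type*} [Fintype ι] [Fintype κ]

theorem exists_sign_mul_nonneg_of_dotProduct_mulVec_ne_zero [Nonempty ι] [Nonempty κ]
    (M : Matrix ι κ ℝ)
    (h : ∀ a b, (∀ i, 0 < a i) → (∀ j, 0 < b j) → a ⬝ᵥ M *ᵥ b ≠ 0) :
    ∃ s ≠ 0, ∀ i j, 0 ≤ s * M i j := by
  classical
  set P := Set.univ.pi fun _ : ι => Set.Ioi (0 : ℝ)
  set Q := Set.univ.pi fun _ : κ => Set.Ioi (0 : ℝ)
  set f : (ι → ℝ) × (κ → ℝ) → ℝ := fun p => p.1 ⬝ᵥ M *ᵥ p.2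
  have hf : Continuous f := by fun_prop
  have hf0 : ∀ p ∈ P ×ˢ Q, f p ≠ 0 := fun p hp =>
    h _ _ (by simpa [P] using hp.1) (by simpa [Q] using hp.2)
  have h1 : ((1 : ι → ℝ), (1 : κ → ℝ)) ∈ P ×ˢ Q := by simp [P, Q]
  have hPQ : IsPreconnected (P ×ˢ Q) :=
    ((convex_pi fun _ _ => convex_Ioi 0).prod (convex_pi fun _ _ => convex_Ioi 0)).isPreconnected
  have hsign : closure (P ×ˢ Q) ⊆ {p | 0 ≤ f (1, 1) * f p} :=
    closure_minimal (fun p hp => (hPQ.mul_pos_of_ne_zero hf.continuousOn hf0 h1 hp).le)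
      (isClosed_le continuous_const (continuous_const.mul hf))
  refine ⟨f (1, 1), hf0 _ h1, fun i j => ?_⟩
  rw [closure_prod_eq, closure_pi_set, closure_pi_set] at hsign
  simpa [f] using
    @hsign (Pi.single i 1, Pi.single j 1) (by simp [Pi.le_def, Pi.single_apply, apply_ite])

theorem dotProduct_mulVec_ne_zero_of_nonneg (M : Matrix ι κ ℝ) (hM : ∀ j, ∃ i, M i j ≠ 0)
    (h : ∀ a b, (∀ i, 0 < a i) → (∀ j, 0 < b j) → a ⬝ᵥ M *ᵥ b ≠ 0)
    {a : ι → ℝ} {b : κ → ℝ} (ha : ∀ i, 0 < a i) (hb : ∀ j, 0 ≤ b j) (hb0 : b ≠ 0) :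
    a ⬝ᵥ M *ᵥ b ≠ 0 := by
  obtain ⟨j₀, hj₀⟩ := Function.ne_iff.mp hb0
  obtain ⟨i₀, hi₀⟩ := hM j₀
  have : Nonempty ι := ⟨i₀⟩
  have : Nonempty κ := ⟨j₀⟩
  obtain ⟨s, hs, hsM⟩ := exists_sign_mul_nonneg_of_dotProduct_mulVec_ne_zero M h
  have hexpand : s * (a ⬝ᵥ M *ᵥ b) = ∑ j, (∑ i, a i * (s * M i j)) * b j := by
    simp only [mulVec, dotProduct, Finset.mul_sum, Finset.sum_mul]
    rw [Finset.sum_comm]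
    exact Finset.sum_congr rfl fun _ _ => Finset.sum_congr rfl fun _ _ => by ring
  refine right_ne_zero_of_mul (hexpand ▸ Finset.sum_pos' ?_ ⟨j₀, Finset.mem_univ _, ?_⟩).ne'
  · exact fun j _ =>
      mul_nonneg (Finset.sum_nonneg fun i _ => mul_nonneg (ha i).le (hsM i j)) (hb j)
  · refine mul_pos (Finset.sum_pos' (fun i _ => mul_nonneg (ha i).le (hsM i j₀))
      ⟨i₀, Finset.mem_univ _, mul_pos (ha i₀) ?_⟩) ((hb j₀).lt_of_ne (Ne.symm hj₀))
    exact (hsM i₀ j₀).lt_of_ne (mul_ne_zero hs hi₀).symm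

end Matrix

section SymplForm

variable {n : ℕ}

def symplBilin (n : ℕ) : LinearMap.BilinForm ℝ (Fin (2 * n) → ℝ) :=
  LinearMap.mk₂ ℝ (symplForm n)
    (fun _ _ _ => by
      simp only [symplForm, Pi.add_apply, ← Finset.sum_add_distrib]
      exact Finset.sum_congr rfl fun _ _ => by ring)
    (fun _ _ _ => by
      simp only [symplForm, Pi.smul_apply, smul_eq_mul, Finset.mul_sum]
      exact Finset.sum_congr rfl fun _ _ => by ring)
    (fun _ _ _ => by
      simp only [symplForm, Pi.add_apply, ← Finset.sum_add_distrib]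
      exact Finset.sum_congr rfl fun _ _ => by ring)
    (fun _ _ _ => by
      simp only [symplForm, Pi.smul_apply, smul_eq_mul, Finset.mul_sum]
      exact Finset.sum_congr rfl fun _ _ => by ring)

theorem symplBilin_apply (v w : Fin (2 * n) → ℝ) : symplBilin n v w = symplForm n v w := rfl

theorem symplForm_smul_left (a : ℝ) (v w : Fin (2 * n) → ℝ) :
    symplForm n (a • v) w = a * symplForm n v w := by
  simp [← symplBilin_apply]

theorem symplForm_smul_right (a : ℝ) (v w : Fin (2 * n) → ℝ) :
    symplForm n v (a • w) = a * symplForm n v w := by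
  simp [← symplBilin_apply]

theorem neg_one_pow_val_rev_add_one (j : Fin (2 * n)) :
    (-1 : ℝ) ^ ((Fin.rev j : ℕ) + 1) = -(-1) ^ ((j : ℕ) + 1) := by
  have h : ((Fin.rev j : ℕ) + 1) + ((j : ℕ) + 1) = 2 * n + 1 := by
    rw [Fin.val_rev]; omega
  have hprod : (-1 : ℝ) ^ ((Fin.rev j : ℕ) + 1) * (-1) ^ ((j : ℕ) + 1) = -1 := by
    rw [← pow_add, h, pow_succ, pow_mul]; norm_num
  have hsq : ((-1 : ℝ) ^ ((j : ℕ) + 1)) ^ 2 = 1 := by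
    rw [← pow_mul, pow_mul']; norm_num
  linear_combination (-1 : ℝ) ^ ((j : ℕ) + 1) * hprod - (-1 : ℝ) ^ ((Fin.rev j : ℕ) + 1) * hsq

theorem symplForm_swap (v w : Fin (2 * n) → ℝ) : symplForm n w v = -symplForm n v w := by
  rw [symplForm, symplForm, ← Finset.sum_neg_distrib]
  refine Fintype.sum_equiv Fin.revPerm _ _ fun j => ?_
  rw [Fin.revPerm_apply, Fin.rev_rev, neg_one_pow_val_rev_add_one]
  ring

theorem symplForm_single_left (k : Fin (2 * n)) (w : Fin (2 * n) → ℝ) :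
    symplForm n (Pi.single k 1) w = (-1) ^ ((k : ℕ) + 1) * w (Fin.rev k) := by
  simp [symplForm, Pi.single_apply]

theorem exists_symplForm_ne_zero {w : Fin (2 * n) → ℝ} (hw : w ≠ 0) :
    ∃ v, symplForm n v w ≠ 0 := by
  obtain ⟨k, hk⟩ := Function.ne_iff.mp hw
  exact ⟨Pi.single (Fin.rev k) 1, by simpa [symplForm_single_left] using hk⟩

theorem exists_symplForm_basis_ne_zero {ι : Type*} (b : Module.Basis ι ℝ (Fin (2 * n) → ℝ))
    {w : Fin (2 * n) → ℝ} (hw : w ≠ 0) : ∃ i, symplForm n (b i) w ≠ 0 := by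
  by_contra! h
  obtain ⟨v, hv⟩ := exists_symplForm_ne_zero hw
  exact hv (LinearMap.congr_fun (b.ext (f₁ := (symplBilin n).flip w) (f₂ := 0) h) v)

theorem symplForm_sum_smul_sum_smul {ι κ : Type*} [Fintype ι] [Fintype κ]
    (e : ι → Fin (2 * n) → ℝ) (f : κ → Fin (2 * n) → ℝ) (c : ι → ℝ) (d : κ → ℝ) :
    symplForm n (∑ i, c i • e i) (∑ j, d j • f j)
      = c ⬝ᵥ (Matrix.of fun i j => symplForm n (e i) (f j)) *ᵥ d := by
  simp only [← symplBilin_apply, map_sum, map_smul, LinearMap.sum_apply, LinearMap.smul_apply,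
    smul_eq_mul, dotProduct, mulVec, Matrix.of_apply, Finset.mul_sum]
  rw [Finset.sum_comm]
  exact Finset.sum_congr rfl fun _ _ => Finset.sum_congr rfl fun _ _ => by ring

end SymplForm

theorem Module.Basis.sum_smul_ne_zero {ι R M : Type*} [Fintype ι] [Ring R] [AddCommGroup M]
    [Module R M] (b : Module.Basis ι R M) {c : ι → R} (hc : c ≠ 0) : ∑ i, c i • b i ≠ 0 :=
  fun h => hc (funext (Fintype.linearIndependent_iff.mp b.linearIndependent c h))

theorem Projectivization.isClosed_setOf_rep_mem {m : ℕ} {K : Set (Fin m → ℝ)}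
    (hK : IsClosed K) (hsmul : ∀ (a : ℝ), ∀ v ∈ K, a • v ∈ K) :
    IsClosed {P : ℙ ℝ (Fin m → ℝ) | P.rep ∈ K} := by
  refine isQuotientMap_quotient_mk'.isClosed_preimage.mp ?_
  convert hK.preimage continuous_subtype_val using 1
  ext ⟨v, hv⟩
  obtain ⟨a, ha⟩ := exists_smul_eq_mk_rep ℝ v hv
  change (mk ℝ v hv).rep ∈ K ↔ v ∈ K
  rw [← ha]
  refine ⟨fun h => ?_, hsmul a v⟩
  have := hsmul ((a⁻¹ : ℝˣ) : ℝ) _ h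
  rwa [← Units.smul_def, inv_smul_smul] at this

section Simplex

variable {n : ℕ}

theorem exists_eq_smul_of_mk_mem_closure_symplSimplex
    (b : Module.Basis (Fin (2 * n)) ℝ (Fin (2 * n) → ℝ)) {w : Fin (2 * n) → ℝ} (hw : w ≠ 0)
    (hQ : mk ℝ w hw ∈ closure (symplSimplex n b)) :
    ∃ (a : ℝ) (d : Fin (2 * n) → ℝ), (∀ i, 0 ≤ d i) ∧ w = a • ∑ i, d i • b i := by
  -- the vectors whose coordinates all have the same weak sign
  set K := {x : Fin (2 * n) → ℝ | ∀ i j, 0 ≤ b.coord i x * b.coord j x}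
  have hK : IsClosed K := by
    simp only [K, Set.ofPred_forall]
    exact isClosed_iInter fun i => isClosed_iInter fun j => isClosed_le continuous_const
      ((b.coord i).continuous_of_finiteDimensional.mul (b.coord j).continuous_of_finiteDimensional)
  have hsmul : ∀ (a : ℝ), ∀ x ∈ K, a • x ∈ K := fun a x hx i j => by
    simpa [mul_mul_mul_comm, ← sq] using mul_nonneg (sq_nonneg a) (hx i j)
  have hsub : symplSimplex n b ⊆ {P | P.rep ∈ K} := by
    rintro _ ⟨v, hv, ⟨c, hc, rfl⟩, rfl⟩
    obtain ⟨a, ha⟩ := exists_smul_eq_mk_rep ℝ _ hv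
    rw [Set.mem_ofPred_eq, ← ha]
    refine hsmul a _ fun i j => ?_
    simpa [Finsupp.single_apply] using mul_nonneg (hc i).le (hc j).le
  have hrep : (mk ℝ w hw).rep ∈ K := closure_minimal hsub (isClosed_setOf_rep_mem hK hsmul) hQ
  obtain ⟨a, ha⟩ := (mk_eq_mk_iff' ℝ _ _ hw (rep_nonzero _)).mp (mk_rep (mk ℝ w hw)).symm
  have hr0 := rep_nonzero (mk ℝ w hw)
  generalize (mk ℝ w hw).rep = r at hrep ha hr0
  subst ha
  obtain ⟨j, hj⟩ : ∃ j, b.repr r j ≠ 0 := Finsupp.ne_iff.mp (b.repr.map_ne_zero_iff.mpr hr0)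
  refine ⟨a * (b.repr r j)⁻¹, fun i => b.repr r j * b.repr r i, fun i => hrep j i, ?_⟩
  conv_lhs => rw [← b.sum_repr r]
  simp only [Finset.smul_sum, smul_smul]
  refine Finset.sum_congr rfl fun i _ => ?_
  field_simp

def SymplNonorthogonal (n : ℕ) (B₁ B₂ : Set (ℙ ℝ (Fin (2 * n) → ℝ))) : Prop :=
  ∀ (v w : Fin (2 * n) → ℝ) (hv : v ≠ 0) (hw : w ≠ 0),
    mk ℝ v hv ∈ B₁ → mk ℝ w hw ∈ B₂ → symplForm n v w ≠ 0

theorem SymplNonorthogonal.symm {B₁ B₂ : Set (ℙ ℝ (Fin (2 * n) → ℝ))}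
    (h : SymplNonorthogonal n B₁ B₂) : SymplNonorthogonal n B₂ B₁ := fun v w hv hw hP hQ => by
  rw [symplForm_swap]
  exact neg_ne_zero.mpr (h w v hw hv hQ hP)

theorem SymplNonorthogonal.of_subset_symplDual {B₁ B₂ : Set (ℙ ℝ (Fin (2 * n) → ℝ))}
    (h : B₁ ⊆ symplDual n B₂) : SymplNonorthogonal n B₁ B₂ := fun v w hv hw hP hQ => by
  obtain ⟨v', hv', hvv', hv'w⟩ := h hP
  obtain ⟨a, rfl⟩ := (mk_eq_mk_iff' ℝ _ _ hv hv').mp hvv'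
  rw [symplForm_smul_left]
  exact mul_ne_zero (left_ne_zero_of_smul hv) (hv'w _ (subset_closure hQ) w hw rfl)

theorem symplSimplex_subset_symplDual_iff
    (b₁ b₂ : Module.Basis (Fin (2 * n)) ℝ (Fin (2 * n) → ℝ)) :
    symplSimplex n b₁ ⊆ symplDual n (symplSimplex n b₂) ↔
      SymplNonorthogonal n (symplSimplex n b₁) (symplSimplex n b₂) := by
  refine ⟨SymplNonorthogonal.of_subset_symplDual, fun h => ?_⟩
  rintro _ ⟨v, hv, ⟨c, hc, rfl⟩, rfl⟩
  refine ⟨_, hv, rfl, fun Q hQ w hw hQw => ?_⟩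
  subst hQw
  obtain ⟨a, d, hd, rfl⟩ := exists_eq_smul_of_mk_mem_closure_symplSimplex b₂ hw hQ
  have hd0 : d ≠ 0 := by
    rintro rfl
    simp at hw
  obtain ⟨i₀, -⟩ := Function.ne_iff.mp hd0
  have hpos_ne : ∀ c' : Fin (2 * n) → ℝ, (∀ i, 0 < c' i) → c' ≠ 0 :=
    fun c' hc' h0 => (hc' i₀).ne' (congrFun h0 i₀)
  have hint : ∀ c' d', (∀ i, 0 < c' i) → (∀ j, 0 < d' j) →
      c' ⬝ᵥ (Matrix.of fun i j => symplForm n (b₁ i) (b₂ j)) *ᵥ d' ≠ 0 := fun c' d' hc' hd' => by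
    rw [← symplForm_sum_smul_sum_smul]
    exact h _ _ (Module.Basis.sum_smul_ne_zero b₁ (hpos_ne c' hc'))
      (Module.Basis.sum_smul_ne_zero b₂ (hpos_ne d' hd')) ⟨_, _, ⟨c', hc', rfl⟩, rfl⟩
      ⟨_, _, ⟨d', hd', rfl⟩, rfl⟩
  rw [symplForm_smul_right, symplForm_sum_smul_sum_smul]
  exact mul_ne_zero (left_ne_zero_of_smul hw) (dotProduct_mulVec_ne_zero_of_nonneg _
    (fun j => exists_symplForm_basis_ne_zero b₁ (b₂.ne_zero j)) hint hc hd hd0)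

end Simplex

/-- For symplectic simplices `B₁, B₂` in `ℙ(ℝ^{2n})`, one has `B₁ ⊆ B₂*` if and only
if `B₂ ⊆ B₁*`. -/
theorem symplSimplex_subset_dual_symm (n : ℕ)
    (e₁ e₂ : Fin (2 * n) → (Fin (2 * n) → ℝ))
    (he₁ : IsSymplecticBasis n e₁) (he₂ : IsSymplecticBasis n e₂) :
    symplSimplex n e₁ ⊆ symplDual n (symplSimplex n e₂)
      ↔ symplSimplex n e₂ ⊆ symplDual n (symplSimplex n e₁) := by
  obtain ⟨b₁, rfl⟩ : ∃ b : Module.Basis (Fin (2 * n)) ℝ (Fin (2 * n) → ℝ), ⇑b = e₁ :=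
    ⟨.mk he₁.1 he₁.2.1.ge, Module.Basis.coe_mk _ _⟩
  obtain ⟨b₂, rfl⟩ : ∃ b : Module.Basis (Fin (2 * n)) ℝ (Fin (2 * n) → ℝ), ⇑b = e₂ :=
    ⟨.mk he₂.1 he₂.2.1.ge, Module.Basis.coe_mk _ _⟩
  rw [symplSimplex_subset_symplDual_iff, symplSimplex_subset_symplDual_iff]
  exact ⟨SymplNonorthogonal.symm, SymplNonorthogonal.symm⟩
end
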